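/- arXiv:1109.4371 — 2 statements merged into one kernel-verified Lean document; each statement's English description precedes it below -/
import Mathlib

section
/- Let U be positive definite and α ∈ ℝ^p with α_i > pa_i + 2 for every i. Define h : Θ_𝒟 → ℝ by h(D, L) = exp(−(1/2) tr(L D^{-1} Lᵀ U)) ∏_{i=1}^p D_{ii}^{−α_i/2}, and let (D*, L*) ∈ Θ_𝒟 be given by D*_{ii} = U_{ii|<i>}/α_i and L*_{<i|} = −(U_{<i>})^{-1} U_{<i|}. Then h(D, L) ≤ h(D*, L*) for every (D, L) ∈ Θ_𝒟; i.e., (D*, L*) is the mode of the (unnormalized) DAG-Wishart density. -/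
/-!
The trace splits over the columns of `L`: `tr(L D⁻¹ Lᵀ U) = ∑ₖ (Lᵀ k ⬝ U Lᵀ k) / D k k`, so `h`
factors into one term per vertex `k`, depending only on `D k k` and on the column `Lᵀ k`,
which is `1` at `k` and free on `pa k`. Completing the square in these free entries gives
`Lᵀ k ⬝ U Lᵀ k = U_{kk|<k>} + ‖w‖²_{U_{<k>}}` with `w = y + U_{<k>}⁻¹ U_{<k|}`, minimal exactly at
`y = L*_{<k|}`. What remains is the one-variable function `t ↦ exp(-c/(2t)) t^(-α/2)`, whose
maximum is at `t = c/α` by `log x ≤ x - 1`.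
-/
open MeasureTheory Matrix Real Finset

noncomputable section

/-- Index type for the free coordinates of a lower triangular matrix `L ∈ ℒ_𝒟`:
a pair of a vertex `i` and a parent `j ∈ pa i`, standing for the entry `L j i`. -/
abbrev Edges {p : ℕ} (pa : Fin p → Finset (Fin p)) : Type := Σ i : Fin p, {j // j ∈ pa i}

/-- The matrix `L ∈ ℒ_𝒟` built from its free coordinates. -/
def mkL {p : ℕ} (pa : Fin p → Finset (Fin p)) (y : Edges pa → ℝ) :
    Matrix (Fin p) (Fin p) ℝ :=
  Matrix.of fun j i => if j = i then 1 else if h : j ∈ pa i then y ⟨i, j, h⟩ else 0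

/-- `A_{<i>}`, the `pa(i) × pa(i)` submatrix of `A`. -/
def sub2 {p : ℕ} (pa : Fin p → Finset (Fin p)) (A : Matrix (Fin p) (Fin p) ℝ) (i : Fin p) :
    Matrix {j // j ∈ pa i} {j // j ∈ pa i} ℝ :=
  A.submatrix (fun j => j.1) (fun j => j.1)

/-- `A_{<i|}`, the column vector `(A_{ji})_{j ∈ pa(i)}`. -/
def colv {p : ℕ} (pa : Fin p → Finset (Fin p)) (A : Matrix (Fin p) (Fin p) ℝ) (i : Fin p) :
    {j // j ∈ pa i} → ℝ :=
  fun j => A j.1 i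

/-- `A_{[i>}`, the row vector `(A_{ij})_{j ∈ pa(i)}`. -/
def rowv {p : ℕ} (pa : Fin p → Finset (Fin p)) (A : Matrix (Fin p) (Fin p) ℝ) (i : Fin p) :
    {j // j ∈ pa i} → ℝ :=
  fun j => A i j.1

/-- `A_{≤i≥}`, the `fa(i) × fa(i)` submatrix of `A`. -/
def subFam {p : ℕ} (pa : Fin p → Finset (Fin p)) (A : Matrix (Fin p) (Fin p) ℝ) (i : Fin p) :
    Matrix {j // j ∈ insert i (pa i)} {j // j ∈ insert i (pa i)} ℝ :=
  A.submatrix (fun j => j.1) (fun j => j.1)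

/-- `A_{ii|<i>} = A_{ii} - A_{[i>} (A_{<i>})⁻¹ A_{<i|}` (equal to `A_{ii}` when `pa(i) = ∅`). -/
def condVar {p : ℕ} (pa : Fin p → Finset (Fin p)) (A : Matrix (Fin p) (Fin p) ℝ) (i : Fin p) :
    ℝ :=
  A i i - rowv pa A i ⬝ᵥ ((sub2 pa A i)⁻¹ *ᵥ colv pa A i)

/-- The normalizing constant `z_𝒟(U, α)`. -/
def zD {p : ℕ} (pa : Fin p → Finset (Fin p)) (U : Matrix (Fin p) (Fin p) ℝ)
    (α : Fin p → ℝ) : ℝ :=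
  ∏ i : Fin p,
    Real.Gamma (α i / 2 - ((pa i).card : ℝ) / 2 - 1) * (2 : ℝ) ^ (α i / 2 - 1) *
        Real.pi ^ (((pa i).card : ℝ) / 2) *
        (sub2 pa U i).det ^ (α i / 2 - ((pa i).card : ℝ) / 2 - 3 / 2) /
      (subFam pa U i).det ^ (α i / 2 - ((pa i).card : ℝ) / 2 - 1)

/-- The unnormalized DAG-Wishart density on the Cholesky space `Θ_𝒟`. -/
def dagDensity {p : ℕ} (pa : Fin p → Finset (Fin p)) (U : Matrix (Fin p) (Fin p) ℝ)
    (α : Fin p → ℝ) (d : Fin p → ℝ) (L : Matrix (Fin p) (Fin p) ℝ) : ℝ :=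
  Real.exp (-(1 / 2) * ((L * Matrix.diagonal (fun i => (d i)⁻¹) * Lᵀ) * U).trace) *
    ∏ i : Fin p, d i ^ (-(α i) / 2)

/-- The Cholesky space `Θ_𝒟` in free coordinates: diagonal coordinates positive. -/
def thetaSet {p : ℕ} (pa : Fin p → Finset (Fin p)) :
    Set ((Fin p → ℝ) × (Edges pa → ℝ)) :=
  {x | ∀ i, 0 < x.1 i}

/-- The DAG-Wishart distribution `π_{U,α}^{Θ_𝒟}` as a measure on the free coordinates. -/
def dagWishart {p : ℕ} (pa : Fin p → Finset (Fin p)) (U : Matrix (Fin p) (Fin p) ℝ)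
    (α : Fin p → ℝ) : Measure ((Fin p → ℝ) × (Edges pa → ℝ)) :=
  (volume.restrict (thetaSet pa)).withDensity
    (fun x => ENNReal.ofReal ((zD pa U α)⁻¹ * dagDensity pa U α x.1 (mkL pa x.2)))


namespace Matrix

variable {n : Type*} [Fintype n] [DecidableEq n]

theorem dotProduct_mulVec_add_two_mul_dotProduct {A : Matrix n n ℝ} (hA : Aᵀ = A)
    (hdet : IsUnit A.det) (b y : n → ℝ) :
    y ⬝ᵥ A *ᵥ y + 2 * (b ⬝ᵥ y) =
      (y + A⁻¹ *ᵥ b) ⬝ᵥ A *ᵥ (y + A⁻¹ *ᵥ b) - b ⬝ᵥ A⁻¹ *ᵥ b := by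
  have hAinv : A *ᵥ (A⁻¹ *ᵥ b) = b := by
    rw [mulVec_mulVec, mul_nonsing_inv A hdet, one_mulVec]
  have hcross : (A⁻¹ *ᵥ b) ⬝ᵥ A *ᵥ y = b ⬝ᵥ y := by
    rw [dotProduct_mulVec, ← mulVec_transpose, hA, hAinv]
  rw [mulVec_add, add_dotProduct, dotProduct_add, dotProduct_add, hcross, hAinv,
    dotProduct_comm y b, dotProduct_comm (A⁻¹ *ᵥ b) b]
  ring

theorem trace_mul_diagonal_mul_transpose_mul (L U : Matrix n n ℝ) (d : n → ℝ) :
    (L * diagonal d * Lᵀ * U).trace = ∑ k, d k * (Lᵀ k ⬝ᵥ U *ᵥ Lᵀ k) := by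
  rw [trace_mul_comm, ← Matrix.mul_assoc, ← Matrix.mul_assoc, trace_mul_comm]
  simp only [trace, diag, mul_apply, diagonal_apply, transpose_apply, mul_ite, mul_zero,
    Finset.sum_ite_eq', Finset.mem_univ, if_true, dotProduct, mulVec, Finset.sum_mul,
    Finset.mul_sum]
  refine Finset.sum_congr rfl fun k _ => Finset.sum_congr rfl fun j _ =>
    Finset.sum_congr rfl fun i _ => by ring

end Matrix

theorem Matrix.dotProduct_mulVec_eq_sum_sum_of_support {n : Type*} [Fintype n]
    (U : Matrix n n ℝ) {s : Finset n} {v : n → ℝ} (hv : ∀ j ∉ s, v j = 0) :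
    v ⬝ᵥ U *ᵥ v = ∑ i ∈ s, ∑ j ∈ s, v i * U i j * v j := by
  simp only [dotProduct, mulVec, Finset.mul_sum]
  rw [← Finset.sum_subset (subset_univ s) fun i _ hi => by simp [hv i hi]]
  refine Finset.sum_congr rfl fun i _ => ?_
  rw [← Finset.sum_subset (subset_univ s) fun j _ hj => by simp [hv j hj]]
  simp only [mul_assoc]

section Family

variable {p : ℕ} (pa : Fin p → Finset (Fin p)) {U : Matrix (Fin p) (Fin p) ℝ} {k : Fin p}
  {v : Fin p → ℝ}

theorem dotProduct_mulVec_eq_of_support_family (hU : Uᵀ = U) (hk : k ∉ pa k) (hvk : v k = 1)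
    (hv : ∀ j, j ≠ k → j ∉ pa k → v j = 0) :
    v ⬝ᵥ U *ᵥ v = U k k + ((v ∘ Subtype.val) ⬝ᵥ sub2 pa U k *ᵥ (v ∘ Subtype.val) +
      2 * (colv pa U k ⬝ᵥ (v ∘ Subtype.val))) := by
  have hsymm : ∀ i j, U i j = U j i := fun i j => congrFun₂ hU j i
  have hcol : colv pa U k ⬝ᵥ (v ∘ Subtype.val) = ∑ j ∈ pa k, U j k * v j :=
    Finset.sum_coe_sort (pa k) fun j => U j k * v j
  have hsub : (v ∘ Subtype.val) ⬝ᵥ sub2 pa U k *ᵥ (v ∘ Subtype.val) =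
      ∑ i ∈ pa k, ∑ j ∈ pa k, v i * U i j * v j := by
    simp only [dotProduct, mulVec, Finset.mul_sum, ← mul_assoc]
    exact (Finset.sum_coe_sort (pa k) fun i => ∑ j : pa k, v i * U i j * v j).trans
      (Finset.sum_congr rfl fun i _ => Finset.sum_coe_sort (pa k) fun j => v i * U i j * v j)
  rw [hcol, hsub, U.dotProduct_mulVec_eq_sum_sum_of_support (s := insert k (pa k))
      fun j hj => hv j (by grind) (by grind)]
  simp only [Finset.sum_insert hk, Finset.sum_add_distrib, hvk, one_mul, mul_one, hsymm k,
    mul_comm (v _) (U _ k)]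
  ring

-- Completing the square in the free entries `v ∘ Subtype.val` of a column of `L ∈ ℒ_𝒟`.
theorem dotProduct_mulVec_eq_condVar_add (hU : Uᵀ = U) (hdet : IsUnit (sub2 pa U k).det)
    (hk : k ∉ pa k) (hvk : v k = 1) (hv : ∀ j, j ≠ k → j ∉ pa k → v j = 0) :
    v ⬝ᵥ U *ᵥ v = condVar pa U k +
      (v ∘ Subtype.val + (sub2 pa U k)⁻¹ *ᵥ colv pa U k) ⬝ᵥ
        sub2 pa U k *ᵥ (v ∘ Subtype.val + (sub2 pa U k)⁻¹ *ᵥ colv pa U k) := by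
  have hsub : (sub2 pa U k)ᵀ = sub2 pa U k := by rw [sub2, transpose_submatrix, hU]
  have hrow : rowv pa U k = colv pa U k := funext fun j => congrFun₂ hU j.1 k
  rw [dotProduct_mulVec_eq_of_support_family pa hU hk hvk hv,
    dotProduct_mulVec_add_two_mul_dotProduct hsub hdet, condVar, hrow]
  ring

theorem condVar_le_dotProduct_mulVec (hU : U.PosDef) (hk : k ∉ pa k) (hvk : v k = 1)
    (hv : ∀ j, j ≠ k → j ∉ pa k → v j = 0) : condVar pa U k ≤ v ⬝ᵥ U *ᵥ v := by
  have hsub : (sub2 pa U k).PosDef := hU.submatrix Subtype.val_injective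
  rw [dotProduct_mulVec_eq_condVar_add pa (by simpa using hU.isHermitian.eq)
    ((isUnit_iff_isUnit_det _).mp hsub.isUnit) hk hvk hv]
  exact le_add_of_nonneg_right (hsub.posSemidef.dotProduct_mulVec_nonneg _)

theorem dotProduct_mulVec_eq_condVar (hU : Uᵀ = U) (hdet : IsUnit (sub2 pa U k).det)
    (hk : k ∉ pa k) (hvk : v k = 1) (hv : ∀ j, j ≠ k → j ∉ pa k → v j = 0)
    (hvpa : v ∘ Subtype.val = -((sub2 pa U k)⁻¹ *ᵥ colv pa U k)) :
    v ⬝ᵥ U *ᵥ v = condVar pa U k := by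
  rw [dotProduct_mulVec_eq_condVar_add pa hU hdet hk hvk hv, hvpa, neg_add_cancel,
    zero_dotProduct, add_zero]

end Family

theorem Real.exp_neg_half_inv_mul_mul_rpow_le {a c q t : ℝ} (ha : 0 < a) (hc : 0 < c)
    (ht : 0 < t) (hcq : c ≤ q) :
    exp (-(1 / 2) * (t⁻¹ * q)) * t ^ (-a / 2) ≤
      exp (-(1 / 2) * ((c / a)⁻¹ * c)) * (c / a) ^ (-a / 2) := by
  have hca : 0 < c / a := div_pos hc ha
  calc exp (-(1 / 2) * (t⁻¹ * q)) * t ^ (-a / 2)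
      ≤ exp (-(1 / 2) * (t⁻¹ * c)) * t ^ (-a / 2) := by
        have : t⁻¹ * c ≤ t⁻¹ * q := by gcongr
        gcongr ?_ * _
        exact exp_le_exp.2 (by linarith)
    _ ≤ exp (-(1 / 2) * ((c / a)⁻¹ * c)) * (c / a) ^ (-a / 2) := by
      rw [rpow_def_of_pos ht, rpow_def_of_pos hca, ← exp_add, ← exp_add, exp_le_exp]
      -- `log x ≤ x - 1` at `x = c / (a t)`, the ratio of the mode to `t`
      have hlog := log_le_sub_one_of_pos (div_pos hca ht)
      rw [log_div hca.ne' ht.ne'] at hlog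
      have hmode : (c / a)⁻¹ * c = a := by field_simp
      have hratio : a * (c / a / t) = t⁻¹ * c := by field_simp
      rw [hmode]
      nlinarith [mul_le_mul_of_nonneg_left hlog ha.le]

theorem dagDensity_eq_prod {p : ℕ} (pa : Fin p → Finset (Fin p)) (U : Matrix (Fin p) (Fin p) ℝ)
    (α d : Fin p → ℝ) (L : Matrix (Fin p) (Fin p) ℝ) :
    dagDensity pa U α d L =
      ∏ k, exp (-(1 / 2) * ((d k)⁻¹ * (Lᵀ k ⬝ᵥ U *ᵥ Lᵀ k))) * d k ^ (-(α k) / 2) := by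
  rw [dagDensity, trace_mul_diagonal_mul_transpose_mul, Finset.mul_sum, exp_sum,
    Finset.prod_mul_distrib]

theorem stmt7_general {p : ℕ} (pa : Fin p → Finset (Fin p))
    (hpa : ∀ i : Fin p, ∀ j ∈ pa i, i < j)
    (U : Matrix (Fin p) (Fin p) ℝ) (hU : U.PosDef) (α : Fin p → ℝ)
    (hα : ∀ i : Fin p, α i > ((pa i).card : ℝ) + 2)
    (d : Fin p → ℝ) (hd : ∀ i, 0 < d i)
    (L : Matrix (Fin p) (Fin p) ℝ) (hL1 : ∀ i, L i i = 1)
    (hL0 : ∀ i j : Fin p, j ≠ i → j ∉ pa i → L j i = 0) :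
    dagDensity pa U α d L ≤
      dagDensity pa U α (fun i => condVar pa U i / α i)
        (Matrix.of fun j i =>
          if j = i then 1
          else if h : j ∈ pa i then (-((sub2 pa U i)⁻¹ *ᵥ colv pa U i)) ⟨j, h⟩
          else 0) := by
  set Lstar : Matrix (Fin p) (Fin p) ℝ := Matrix.of fun j i =>
    if j = i then 1
    else if h : j ∈ pa i then (-((sub2 pa U i)⁻¹ *ᵥ colv pa U i)) ⟨j, h⟩
    else 0
  have hk : ∀ k, k ∉ pa k := fun k hk => lt_irrefl k (hpa k k hk)
  have hstar : ∀ k, Lstarᵀ k ⬝ᵥ U *ᵥ Lstarᵀ k = condVar pa U k := fun k =>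
    dotProduct_mulVec_eq_condVar pa (by simpa using hU.isHermitian.eq)
      ((isUnit_iff_isUnit_det _).mp (hU.submatrix Subtype.val_injective).isUnit) (hk k)
      (by simp [Lstar]) (fun j hjk hj => by simp [Lstar, hjk, hj])
      (funext fun j => by simp [Lstar, ne_of_mem_of_not_mem j.2 (hk k)])
  have hcond : ∀ k, 0 < condVar pa U k := fun k => by
    simpa [hstar k] using hU.dotProduct_mulVec_pos (x := Lstarᵀ k)
      fun h => by simpa [Lstar] using congrFun h k
  rw [dagDensity_eq_prod, dagDensity_eq_prod]
  refine Finset.prod_le_prod (fun k _ => by have := hd k; positivity) fun k _ => ?_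
  rw [hstar k]
  exact exp_neg_half_inv_mul_mul_rpow_le (by linarith [hα k, (pa k).card.cast_nonneg (α := ℝ)])
    (hcond k) (hd k) (condVar_le_dotProduct_mulVec pa hU (hk k) (hL1 k) (hL0 k))

/-- the mode of the (unnormalized) DAG-Wishart density is attained at
`D*_{ii} = U_{ii|<i>}/α_i`, `L*_{<i|} = -(U_{<i>})⁻¹ U_{<i|}`. -/
theorem stmt7 {p : ℕ} (hp : 1 ≤ p) (pa : Fin p → Finset (Fin p))
    (hpa : ∀ i : Fin p, ∀ j ∈ pa i, i < j)
    (U : Matrix (Fin p) (Fin p) ℝ) (hU : U.PosDef) (α : Fin p → ℝ)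
    (hα : ∀ i : Fin p, α i > ((pa i).card : ℝ) + 2)
    (d : Fin p → ℝ) (hd : ∀ i, 0 < d i)
    (L : Matrix (Fin p) (Fin p) ℝ) (hL1 : ∀ i, L i i = 1)
    (hL0 : ∀ i j : Fin p, j ≠ i → j ∉ pa i → L j i = 0) :
    dagDensity pa U α d L ≤
      dagDensity pa U α (fun i => condVar pa U i / α i)
        (Matrix.of fun j i =>
          if j = i then 1
          else if h : j ∈ pa i then (-((sub2 pa U i)⁻¹ *ᵥ colv pa U i)) ⟨j, h⟩
          else 0) :=
  stmt7_general pa hpa U hU α hα d hd L hL1 hL0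
end
end

section
/- Suppose the DAG 𝒟 is homogeneous of type I, and let Σ ∈ PD_𝒟, i.e., Σ = (Lᵀ)^{-1} D L^{-1} for some (D, L) ∈ Θ_𝒟. Then for every vertex i, det(Σ_{<i>}) = ∏_{ℓ ∈ pa(i)} Σ_{ℓℓ|<ℓ>}. -/
open MeasureTheory Matrix Real Finset

noncomputable section

/-- The DAG is transitive: `i ∈ pa(j)` and `j ∈ pa(k)` imply `i ∈ pa(k)`. -/
def DagTransitive {p : ℕ} (pa : Fin p → Finset (Fin p)) : Prop :=
  ∀ i j k : Fin p, i ∈ pa j → j ∈ pa k → i ∈ pa k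

/-- The DAG is perfect: any two distinct parents of a common vertex are adjacent. -/
def DagPerfect {p : ℕ} (pa : Fin p → Finset (Fin p)) : Prop :=
  ∀ k j j' : Fin p, j ∈ pa k → j' ∈ pa k → j ≠ j' → (j ∈ pa j' ∨ j' ∈ pa j)

/-!
Write `Σ = Mᵀ D M` with `M = L⁻¹`. If a vertex set `S` is ancestral (closed under taking
parents), then `L`, and hence `M`, maps the coordinates in `S` into themselves, so
`Σ_S = (M_S)ᵀ D_S M_S` with `M_S = (L_S)⁻¹` unitriangular, and `det Σ_S = ∏_{s ∈ S} d_s`.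
Transitivity makes both `pa(l)` and `fa(l)` ancestral, so the Schur complement formula
`det Σ_{fa(l)} = det Σ_{<l>} · Σ_{ll|<l>}` yields `Σ_{ll|<l>} = d_l`.
-/

namespace Matrix

variable {l m n R : Type*} [Fintype n]

theorem submatrix_mul_of_apply_eq_zero [NonUnitalNonAssocSemiring R] (A : Matrix m n R)
    (B : Matrix n n R) (r : l → m) {S : Finset n} (hB : ∀ k ∉ S, ∀ s ∈ S, B k s = 0) :
    (A * B).submatrix r (fun s : S => s.1) =
      A.submatrix r (fun s : S => s.1) * B.submatrix (fun s : S => s.1) (fun s => s.1) := by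
  ext i j
  simp only [submatrix_apply, mul_apply]
  rw [← Finset.sum_subset (Finset.subset_univ S) fun k _ hk => by rw [hB k hk j j.2, mul_zero],
    ← Finset.sum_coe_sort S]

theorem nonsing_inv_apply_eq_zero_of_apply_eq_zero [DecidableEq n] [CommRing R]
    {A : Matrix n n R} (hA : IsUnit A.det) {S : Finset n}
    (h : ∀ k ∉ S, ∀ s ∈ S, A k s = 0) : ∀ k ∉ S, ∀ s ∈ S, A⁻¹ k s = 0 := by
  have := A.invertibleOfIsUnitDet hA
  -- the two blocks `S` (`false`) and its complement (`true`)
  have hblock : A.BlockTriangular fun k => decide (k ∉ S) := fun k s hks => by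
    simp only [Bool.lt_iff, decide_eq_false_iff_not, not_not, decide_eq_true_eq] at hks
    exact h k hks.2 s hks.1
  intro k hk s hs
  exact blockTriangular_inv_of_blockTriangular hblock (by simpa [Bool.lt_iff] using ⟨hs, hk⟩)

end Matrix

theorem det_subFam_eq_det_sub2_mul_condVar {p : ℕ} (pa : Fin p → Finset (Fin p))
    (A : Matrix (Fin p) (Fin p) ℝ) {l : Fin p} (hl : l ∉ pa l)
    (hA : IsUnit (sub2 pa A l).det) :
    (subFam pa A l).det = (sub2 pa A l).det * condVar pa A l := by
  let e : {j // j ∈ pa l} ⊕ Unit ≃ {j // j ∈ insert l (pa l)} :=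
    ((Finset.subtypeInsertEquivOption hl).trans (Equiv.optionEquivSumPUnit _)).symm
  have hblocks : (subFam pa A l).submatrix e e =
      fromBlocks (sub2 pa A l) (of fun j _ => A j l) (of fun _ j => A l j)
        (of fun _ _ => A l l) := by
    ext (i | i) (j | j) <;> rfl
  have := (sub2 pa A l).invertibleOfIsUnitDet hA
  rw [← det_submatrix_equiv_self e, hblocks, det_fromBlocks₁₁, invOf_eq_nonsing_inv,
    det_unique (n := Unit)]
  congr 1
  simp only [condVar, rowv, colv, dotProduct, mulVec, Matrix.sub_apply, of_apply, mul_apply,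
    univ_eq_attach, sum_mul, mul_sum, mul_assoc, sub_right_inj]
  exact Finset.sum_comm

def IsAncestral {p : ℕ} (pa : Fin p → Finset (Fin p)) (S : Finset (Fin p)) : Prop :=
  ∀ s ∈ S, pa s ⊆ S

section DAG

variable {p : ℕ} {pa : Fin p → Finset (Fin p)}

theorem DagTransitive.isAncestral_pa (htr : DagTransitive pa) (i : Fin p) :
    IsAncestral pa (pa i) :=
  fun s hs _ hk => htr _ s i hk hs

theorem DagTransitive.isAncestral_insert_pa (htr : DagTransitive pa) (i : Fin p) :
    IsAncestral pa (insert i (pa i)) := by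
  intro s hs
  rcases Finset.mem_insert.mp hs with rfl | hs
  · exact Finset.subset_insert _ _
  · exact (htr.isAncestral_pa i s hs).trans (Finset.subset_insert _ _)

variable {L : Matrix (Fin p) (Fin p) ℝ}

theorem IsAncestral.apply_eq_zero (hL0 : ∀ i j : Fin p, j ≠ i → j ∉ pa i → L j i = 0)
    {S : Finset (Fin p)} (hS : IsAncestral pa S) : ∀ k ∉ S, ∀ s ∈ S, L k s = 0 :=
  fun k hk s hs => hL0 s k (by rintro rfl; exact hk hs) fun hks => hk (hS s hs hks)

theorem blockTriangular_toDual_of_parent_lt (hpa : ∀ i : Fin p, ∀ j ∈ pa i, i < j)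
    (hL0 : ∀ i j : Fin p, j ≠ i → j ∉ pa i → L j i = 0) : L.BlockTriangular OrderDual.toDual :=
  fun j i hij => hL0 i j (ne_of_lt hij) fun hj => (hpa i j hj).not_gt hij

theorem det_submatrix_of_parent_lt (hpa : ∀ i : Fin p, ∀ j ∈ pa i, i < j)
    (hL1 : ∀ i, L i i = 1) (hL0 : ∀ i j : Fin p, j ≠ i → j ∉ pa i → L j i = 0)
    (S : Finset (Fin p)) : (L.submatrix (fun s : S => s.1) (fun s => s.1)).det = 1 := by
  have hlow : (L.submatrix (fun s : S => s.1) (fun s => s.1)).IsLowerTriangular :=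
    (blockTriangular_toDual_of_parent_lt hpa hL0).submatrix
  simp [det_of_isLowerTriangular _ hlow, hL1]

theorem det_submatrix_of_isAncestral (hpa : ∀ i : Fin p, ∀ j ∈ pa i, i < j)
    (hL1 : ∀ i, L i i = 1) (hL0 : ∀ i j : Fin p, j ≠ i → j ∉ pa i → L j i = 0)
    (d : Fin p → ℝ) {S : Finset (Fin p)} (hS : IsAncestral pa S) :
    (((Lᵀ)⁻¹ * diagonal d * L⁻¹).submatrix (fun s : S => s.1) (fun s => s.1)).det =
      ∏ s ∈ S, d s := by
  have hL : L.det = 1 := by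
    simp [det_of_isLowerTriangular _ (blockTriangular_toDual_of_parent_lt hpa hL0), hL1]
  have hM : ∀ k ∉ S, ∀ s ∈ S, L⁻¹ k s = 0 :=
    nonsing_inv_apply_eq_zero_of_apply_eq_zero (by simp [hL]) (hS.apply_eq_zero hL0)
  have hD : ∀ k ∉ S, ∀ s ∈ S, diagonal d k s = 0 :=
    fun k hk s hs => diagonal_apply_ne _ (by rintro rfl; exact hk hs)
  have hMS : (L⁻¹.submatrix (fun s : S => s.1) (fun s => s.1)).det = 1 := by
    have h := congrArg det (submatrix_mul_of_apply_eq_zero L L⁻¹ (fun s : S => s.1) hM)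
    rwa [mul_nonsing_inv _ (by simp [hL]), submatrix_one _ Subtype.val_injective, det_one,
      det_mul, det_submatrix_of_parent_lt hpa hL1 hL0, one_mul, eq_comm] at h
  rw [← transpose_nonsing_inv, submatrix_mul_of_apply_eq_zero _ _ _ hM,
    submatrix_mul_of_apply_eq_zero _ _ _ hD, det_mul, det_mul, ← transpose_submatrix,
    det_transpose, hMS, submatrix_diagonal _ _ Subtype.val_injective, det_diagonal,
    mul_one, one_mul]
  exact Finset.prod_coe_sort S d

theorem det_sub2_of_dagTransitive (hpa : ∀ i : Fin p, ∀ j ∈ pa i, i < j) (htr : DagTransitive pa)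
    (hL1 : ∀ i, L i i = 1) (hL0 : ∀ i j : Fin p, j ≠ i → j ∉ pa i → L j i = 0)
    (d : Fin p → ℝ) (i : Fin p) :
    (sub2 pa ((Lᵀ)⁻¹ * diagonal d * L⁻¹) i).det = ∏ s ∈ pa i, d s :=
  det_submatrix_of_isAncestral hpa hL1 hL0 d (htr.isAncestral_pa i)

theorem condVar_eq_of_dagTransitive (hpa : ∀ i : Fin p, ∀ j ∈ pa i, i < j)
    (htr : DagTransitive pa) (hL1 : ∀ i, L i i = 1)
    (hL0 : ∀ i j : Fin p, j ≠ i → j ∉ pa i → L j i = 0) {d : Fin p → ℝ} (hd : ∀ i, 0 < d i)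
    (l : Fin p) : condVar pa ((Lᵀ)⁻¹ * diagonal d * L⁻¹) l = d l := by
  have hl : l ∉ pa l := fun h => lt_irrefl l (hpa l l h)
  have hpos : 0 < ∏ s ∈ pa l, d s := Finset.prod_pos fun s _ => hd s
  have hsub2 := det_sub2_of_dagTransitive hpa htr hL1 hL0 d l
  have hsubFam : (subFam pa ((Lᵀ)⁻¹ * diagonal d * L⁻¹) l).det = d l * ∏ s ∈ pa l, d s := by
    rw [← Finset.prod_insert hl]
    exact det_submatrix_of_isAncestral hpa hL1 hL0 d (htr.isAncestral_insert_pa l)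
  have hschur := det_subFam_eq_det_sub2_mul_condVar pa ((Lᵀ)⁻¹ * diagonal d * L⁻¹) hl
    (by rw [hsub2]; exact hpos.ne'.isUnit)
  rw [hsubFam, hsub2, mul_comm (d l)] at hschur
  exact (mul_left_cancel₀ hpos.ne' hschur).symm

end DAG

theorem stmt14_general {p : ℕ} (pa : Fin p → Finset (Fin p))
    (hpa : ∀ i : Fin p, ∀ j ∈ pa i, i < j)
    (htr : DagTransitive pa)
    (d : Fin p → ℝ) (hd : ∀ i, 0 < d i)
    (L : Matrix (Fin p) (Fin p) ℝ) (hL1 : ∀ i, L i i = 1)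
    (hL0 : ∀ i j : Fin p, j ≠ i → j ∉ pa i → L j i = 0)
    (Sig : Matrix (Fin p) (Fin p) ℝ) (hSig : Sig = (Lᵀ)⁻¹ * Matrix.diagonal d * L⁻¹) :
    ∀ i : Fin p, (sub2 pa Sig i).det = ∏ l ∈ pa i, condVar pa Sig l := by
  intro i
  rw [hSig, det_sub2_of_dagTransitive hpa htr hL1 hL0 d i]
  exact Finset.prod_congr rfl fun l _ => (condVar_eq_of_dagTransitive hpa htr hL1 hL0 hd l).symm

/-- for a homogeneous DAG of type I and `Σ ∈ PD_𝒟`, for every vertex `i`,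
`det(Σ_{<i>}) = ∏_{ℓ ∈ pa(i)} Σ_{ℓℓ|<ℓ>}`. -/
theorem stmt14 {p : ℕ} (hp : 1 ≤ p) (pa : Fin p → Finset (Fin p))
    (hpa : ∀ i : Fin p, ∀ j ∈ pa i, i < j)
    (htr : DagTransitive pa) (hperf : DagPerfect pa)
    (d : Fin p → ℝ) (hd : ∀ i, 0 < d i)
    (L : Matrix (Fin p) (Fin p) ℝ) (hL1 : ∀ i, L i i = 1)
    (hL0 : ∀ i j : Fin p, j ≠ i → j ∉ pa i → L j i = 0)
    (Sig : Matrix (Fin p) (Fin p) ℝ) (hSig : Sig = (Lᵀ)⁻¹ * Matrix.diagonal d * L⁻¹) :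
    ∀ i : Fin p, (sub2 pa Sig i).det = ∏ l ∈ pa i, condVar pa Sig l :=
  stmt14_general pa hpa htr d hd L hL1 hL0 Sig hSig

end
end
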